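/- Let ≺ be a reflection order on Φ⁺ (Φ⁺ = {β₁ ≺ ⋯ ≺ β_N}) and define ≺' on Φ⁺ by α ≺' β iff −w₀α ≺ −w₀β; then ≺' is again a reflection order, whose i-th element is −w₀β_i. For all u, v ∈ W and 0 ≤ n ≤ N, the map sending a path u = w₁ →^{(α₁,m₁)} ⋯ →^{(α_ℓ,m_ℓ)} w_{ℓ+1} = v to the path w₀w₁w₀ →^{(−w₀α₁,m₁)} ⋯ →^{(−w₀α_ℓ,m_ℓ)} w₀w_{ℓ+1}w₀ is a well-defined bijection from Paths^≺_{≤n}(u ⇒ v) onto Paths^{≺'}_{≤n}(w₀uw₀ ⇒ w₀vw₀); it preserves lengths of paths and sends a path of weight ω to a path of weight −w₀ω. -/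

import Mathlib

noncomputable section

open Module

variable {V : Type} [AddCommGroup V] [Module ℝ V] [DecidableEq V]

/-- A finite crystallographic root system in `V`, together with a choice of positive roots. -/
structure RootSystemData (V : Type) [AddCommGroup V] [Module ℝ V] where
  /-- the (finite) set of roots -/
  Φ : Finset V
  /-- the set of positive roots -/
  pos : Finset V
  /-- the coroot `α∨`, viewed as a linear functional on `V` (only its values on `Φ` matter) -/
  coroot : V → Module.Dual ℝ V
  /-- the integer-valued pairing `⟨α∨, β⟩` (crystallographic condition) -/
  pairing : V → V → ℤ
  /-- the reflection `s_α` (only its values for `α ∈ Φ` matter) -/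
  s : V → V ≃ₗ[ℝ] V
  span_eq : Submodule.span ℝ (Φ : Set V) = ⊤
  ne_zero : ∀ α ∈ Φ, α ≠ (0 : V)
  neg_mem : ∀ α ∈ Φ, -α ∈ Φ
  coroot_self : ∀ α ∈ Φ, coroot α α = 2
  pairing_eq : ∀ α ∈ Φ, ∀ β ∈ Φ, (pairing α β : ℝ) = coroot α β
  s_apply : ∀ α ∈ Φ, ∀ v : V, s α v = v - coroot α v • α
  s_root_mem : ∀ α ∈ Φ, ∀ β ∈ Φ, s α β ∈ Φ
  pos_subset : pos ⊆ Φ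
  mem_pos_or : ∀ α ∈ Φ, α ∈ pos ∨ -α ∈ pos
  pos_not_neg : ∀ α ∈ pos, -α ∉ pos
  pos_add_mem : ∀ α ∈ pos, ∀ β ∈ pos, α + β ∈ Φ → α + β ∈ pos

namespace RootSystemData

variable (R : RootSystemData V)

/-- The Weyl group `W`, realized as a subgroup of the linear automorphisms of `V`,
generated by the reflections in the roots. -/
def Wgrp : Subgroup (V ≃ₗ[ℝ] V) := Subgroup.closure ((fun α => R.s α) '' (R.Φ : Set V))

/-- The length function `ℓ(w) = #{α ∈ Φ⁺ : w α ∈ Φ⁻}`. -/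
def len (w : V ≃ₗ[ℝ] V) : ℕ := (R.pos.filter fun α => -(w α) ∈ R.pos).card

/-- `⟨α∨, 2ρ⟩ = Σ_{β ∈ Φ⁺} ⟨α∨, β⟩` (an integer). -/
def pairSum (α : V) : ℤ := ∑ β ∈ R.pos, R.pairing α β

/-- The affine reflection `r_b` (for `b = (γ, ν) ∈ Φ_af`) applied to an affine root `c = (α, k)`:
`r_b (α, k) = (s_γ α, k − ν ⟨γ∨, α⟩)`. -/
def afRefl (b c : V × ℤ) : V × ℤ := (R.s b.1 c.1, c.2 - b.2 * R.pairing b.1 c.1)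

/-- Positivity of an affine root `(α, n)`: either `α ∈ Φ⁺` and `n ≥ 0`, or `α ∈ Φ⁻` and `n ≥ 1`. -/
def AfPos (c : V × ℤ) : Prop := (c.1 ∈ R.pos ∧ 0 ≤ c.2) ∨ (-c.1 ∈ R.pos ∧ 1 ≤ c.2)

/-- The affine reflection `r_b = s_γ t^{ν γ∨}` (for `b = (γ, ν)`), as an element of the
affine Weyl group realized as pairs `(w, μ) ∈ W × (coweights)` representing `w t^μ`. -/
def rE (b : V × ℤ) : (V ≃ₗ[ℝ] V) × Module.Dual ℝ V := (R.s b.1, (b.2 : ℝ) • R.coroot b.1)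

end RootSystemData

/-- Multiplication in the affine Weyl group `W̃ = W ⋉ Λ`, where `(w, μ)` represents `w t^μ`:
`(w t^μ)(w' t^{μ'}) = (w w') t^{w'⁻¹ μ + μ'}`, and the contragredient action on coweights is
`w'⁻¹ • μ = μ ∘ w'`. -/
def amul (x y : (V ≃ₗ[ℝ] V) × Module.Dual ℝ V) : (V ≃ₗ[ℝ] V) × Module.Dual ℝ V :=
  (x.1 * y.1, x.2 ∘ₗ y.1.toLinearMap + y.2)

/-- The ordered product `x₁ x₂ ⋯ x_k` in the affine Weyl group. -/
def aprod (l : List ((V ≃ₗ[ℝ] V) × Module.Dual ℝ V)) : (V ≃ₗ[ℝ] V) × Module.Dual ℝ V :=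
  l.foldr amul (1, 0)

namespace RootSystemData

variable (R : RootSystemData V)

/-- Given affine roots `b 0, …, b (K-1)`, this is `r_{b_{K-1}} ⋯ r_{b_{h+1}} r_{b_h} (b h)`
(apply the reflections with indices `≥ h` in ascending order of application). -/
def twist {K : ℕ} (b : Fin K → V × ℤ) (h : Fin K) : V × ℤ :=
  (((List.finRange K).filter fun j => h ≤ j).foldl (fun c j => R.afRefl (b j) c) (b h))

/-- Given affine roots `b 0, …, b (K-1)`, this is `r_{b_{K-1}} ⋯ r_{b_{h+1}} (b h)`
(apply the reflections with indices `> h` in ascending order of application). -/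
def twistStrict {K : ℕ} (b : Fin K → V × ℤ) (h : Fin K) : V × ℤ :=
  (((List.finRange K).filter fun j => h < j).foldl (fun c j => R.afRefl (b j) c) (b h))

end RootSystemData

/-- A reflection order on `Φ⁺`, given by an enumeration `β 0 ≺ β 1 ≺ ⋯ ≺ β (N-1)` of the
positive roots such that whenever `β i + β j = β k` one has `i < k < j` or `j < k < i`. -/
structure ReflectionOrder (R : RootSystemData V) (N : ℕ) where
  β : Fin N → V
  inj : Function.Injective β
  range_eq : Set.range β = (R.pos : Set V)
  order3 : ∀ i j k : Fin N, β i + β j = β k → (i < k ∧ k < j) ∨ (j < k ∧ k < i)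

/-- An increasing labelled path in the double Bruhat graph `DBG(W)` from `u` to `v`:
a sequence of edges `u = u₁ → u₂ → ⋯ → u_{ℓ+1} = v`, whose labels are positive roots
`lab (ix 1), …, lab (ix ℓ)` with `ix` strictly monotone (so the path is increasing for the
order given by the enumeration `lab`) and all indices lying in the allowed set `S`;
the edge from `u_i` carries an integer `m i ≥ 0`, with `m i ≥ 1` if `u_i (α_i) ∈ Φ⁻`. -/
structure IncPath (R : RootSystemData V) {N : ℕ} (lab : Fin N → V) (S : Set (Fin N))
    (u v : V ≃ₗ[ℝ] V) where
  len : ℕ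
  ix : Fin len → Fin N
  mono : StrictMono ix
  mem_S : ∀ i, ix i ∈ S
  m : Fin len → ℤ
  vert : Fin (len + 1) → V ≃ₗ[ℝ] V
  vert_zero : vert 0 = u
  vert_last : vert (Fin.last len) = v
  lab_mem : ∀ i : Fin len, lab (ix i) ∈ R.pos
  step : ∀ i : Fin len, vert i.succ = vert i.castSucc * R.s (lab (ix i))
  m_lb : ∀ i : Fin len, (if vert i.castSucc (lab (ix i)) ∈ R.pos then (0 : ℤ) else 1) ≤ m i

/-- The weight `wt(p) = m₁ α₁∨ + ⋯ + m_ℓ α_ℓ∨` of a path, as a coweight. -/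
def IncPath.wt {R : RootSystemData V} {N : ℕ} {lab : Fin N → V} {S : Set (Fin N)}
    {u v : V ≃ₗ[ℝ] V} (p : IncPath R lab S u v) : Module.Dual ℝ V :=
  ∑ i : Fin p.len, (p.m i : ℝ) • R.coroot (lab (p.ix i))

/-- A path in the quantum Bruhat graph `QBG(W)` from `u` to `v`: every edge is either an
edge `w →^{(α,0)} w s_α` with `ℓ(w s_α) = ℓ(w) + 1`, or an edge `w →^{(α,1)} w s_α` with
`ℓ(w s_α) = ℓ(w) + 1 − ⟨α∨, 2ρ⟩`. -/
structure QPath (R : RootSystemData V) (u v : V ≃ₗ[ℝ] V) where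
  len : ℕ
  lab : Fin len → V
  lab_mem : ∀ i, lab i ∈ R.pos
  m : Fin len → ℤ
  vert : Fin (len + 1) → V ≃ₗ[ℝ] V
  vert_zero : vert 0 = u
  vert_last : vert (Fin.last len) = v
  step : ∀ i : Fin len, vert i.succ = vert i.castSucc * R.s (lab i)
  edge : ∀ i : Fin len,
    (m i = 0 ∧ R.len (vert i.succ) = R.len (vert i.castSucc) + 1) ∨
    (m i = 1 ∧ (R.len (vert i.succ) : ℤ) = (R.len (vert i.castSucc) : ℤ) + 1 - R.pairSum (lab i))

/-- The weight of a path in the quantum Bruhat graph. -/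
def QPath.wt {R : RootSystemData V} {u v : V ≃ₗ[ℝ] V} (q : QPath R u v) : Module.Dual ℝ V :=
  ∑ i : Fin q.len, (q.m i : ℝ) • R.coroot (q.lab i)

/-- A simple root: a positive root that is not the sum of two positive roots. -/
def IsSimpleRoot (R : RootSystemData V) (α : V) : Prop :=
  α ∈ R.pos ∧ ¬ ∃ β ∈ R.pos, ∃ γ ∈ R.pos, α = β + γ

/-- `l` is a reduced word for `w`: a list of simple roots whose reflections multiply to `w`,
of length `ℓ(w)`. -/
def IsReducedWord (R : RootSystemData V) (l : List V) (w : V ≃ₗ[ℝ] V) : Prop :=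
  (∀ a ∈ l, IsSimpleRoot R a) ∧ (l.map R.s).prod = w ∧ l.length = R.len w

/-- Bruhat order: `x ≤ y` iff some reduced word for `y` contains a subword which is a
reduced word for `x`. -/
def BruhatLE (R : RootSystemData V) (x y : V ≃ₗ[ℝ] V) : Prop :=
  ∃ ly : List V, IsReducedWord R ly y ∧ ∃ lx : List V, lx.Sublist ly ∧ IsReducedWord R lx x

/-- An admissible type for `(x, u, ≺)`, bounded by `n`: indices `n₁ < ⋯ < n_K ≤ n` and
integers `ν₁, …, ν_K` such that, with `b_h = (u β_{n_h}, ν_h)`, each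
`r_{b_K} ⋯ r_{b_{h+1}} (b_h)` is a negative affine root and `r_{b₁} ⋯ r_{b_K} = x` in `W̃`. -/
structure AdmissibleType (R : RootSystemData V) {N : ℕ} (RO : ReflectionOrder R N) (n : ℕ)
    (u : V ≃ₗ[ℝ] V) (x : (V ≃ₗ[ℝ] V) × Module.Dual ℝ V) where
  K : ℕ
  idx : Fin K → Fin N
  mono : StrictMono idx
  bounded : ∀ h, (idx h : ℕ) < n
  ν : Fin K → ℤ
  neg_cond : ∀ h : Fin K, ¬ R.AfPos (R.twistStrict (fun j => (u (RO.β (idx j)), ν j)) h)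
  prod_eq : aprod (List.ofFn fun h : Fin K => R.rE (u (RO.β (idx h)), ν h)) = x



/-! An element of the Weyl group mapping every positive root to a positive root is the identity:
it is a word in simple reflections (a reflection `s_γ` is conjugated by a simple reflection to
`s_{s_a γ}` with `s_a γ` lower in the dominance order), and such a word is shortened by the
deletion condition until it is empty. Applied to `w₀²` this gives `w₀² = 1`, so `x ↦ -w₀ x` is an
involution of `V` preserving `Φ⁺`, with `s_{-w₀α} = w₀ s_α w₀` and `(-w₀α)∨ = -α∨ ∘ w₀⁻¹`.
Conjugating the vertices of a path by `w₀` and relabelling its edges by `-w₀` therefore keeps the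
sign conditions on the `m_i`, and doing it twice gives back the path. -/

set_option linter.unusedSectionVars false

namespace RootSystemData

open Set

theorem finiteDimensional (R : RootSystemData V) : FiniteDimensional ℝ V :=
  ⟨R.span_eq ▸ Submodule.fg_span R.Φ.finite_toSet⟩

variable (R : RootSystemData V)

lemma s_eq_preReflection {α : V} (hα : α ∈ R.Φ) :
    ⇑(R.s α) = preReflection α (R.coroot α) :=
  funext (R.s_apply α hα)

lemma mapsTo_preReflection {α : V} (hα : α ∈ R.Φ) :
    MapsTo (preReflection α (R.coroot α)) R.Φ R.Φ := by
  rw [← R.s_eq_preReflection hα]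
  exact R.s_root_mem α hα

lemma coroot_eq_of_mapsTo {α : V} (hα : α ∈ R.Φ) {f : Dual ℝ V} (hf : f α = 2)
    (hmaps : MapsTo (preReflection α f) R.Φ R.Φ) : R.coroot α = f :=
  Dual.eq_of_preReflection_mapsTo R.Φ.finite_toSet R.span_eq (R.coroot_self α hα)
    (R.mapsTo_preReflection hα) hf hmaps

lemma coroot_injOn : InjOn R.coroot R.Φ := fun α hα β hβ h =>
  have : IsAddTorsionFree V := .of_isTorsionFree ℝ V
  eq_of_mapsTo_reflection_of_mem R.Φ.finite_toSet (R.coroot_self α hα) (R.coroot_self β hβ)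
    (by rw [← h, R.coroot_self α hα]) (by rw [h, R.coroot_self β hβ])
    (R.mapsTo_preReflection hα) (R.mapsTo_preReflection hβ) hβ

def toRootPairing : RootPairing R.Φ ℝ V (Dual ℝ V) :=
  haveI := R.finiteDimensional
  RootPairing.mk'' (Dual.eval ℝ V) (Function.Embedding.subtype _)
    ⟨fun α => R.coroot α, fun α β h => Subtype.ext (R.coroot_injOn α.2 β.2 h)⟩
    (fun α => R.coroot_self α α.2)
    (fun α => by
      simp only [Function.Embedding.coe_subtype, Subtype.range_coe_subtype, Finset.setOfPred_mem]
      exact R.mapsTo_preReflection α.2)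
    (by simpa using R.span_eq)

@[simp] lemma toRootPairing_root (α : R.Φ) : R.toRootPairing.root α = α := by
  rfl

@[simp] lemma toRootPairing_pairing (α β : R.Φ) : R.toRootPairing.pairing α β = R.coroot β α := by
  rfl

instance : R.toRootPairing.IsCrystallographic :=
  ⟨fun α β => ⟨R.pairing β α, by simpa using R.pairing_eq β β.2 α α.2⟩⟩

lemma toRootPairing_pairingIn (α β : R.Φ) :
    (R.toRootPairing.pairingIn ℤ α β : ℝ) = R.coroot β α := by
  simpa using R.toRootPairing.algebraMap_pairingIn ℤ α β

lemma add_mem_of_coroot_neg {α β : V} (hα : α ∈ R.Φ) (hβ : β ∈ R.Φ) (h : R.coroot α β < 0)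
    (hne : α + β ≠ 0) : α + β ∈ R.Φ := by
  have hpair : R.toRootPairing.pairingIn ℤ ⟨β, hβ⟩ ⟨α, hα⟩ < 0 := by
    rw [← Int.cast_lt_zero (R := ℝ), R.toRootPairing_pairingIn]
    exact h
  have := R.toRootPairing.root_add_root_mem_of_pairingIn_neg hpair
    (by simpa [eq_neg_iff_add_eq_zero, add_comm] using hne)
  simpa [add_comm] using this

lemma coroot_pos_comm {α β : V} (hα : α ∈ R.Φ) (hβ : β ∈ R.Φ) :
    0 < R.coroot α β ↔ 0 < R.coroot β α := by
  rw [← R.toRootPairing_pairingIn ⟨β, hβ⟩ ⟨α, hα⟩, ← R.toRootPairing_pairingIn ⟨α, hα⟩ ⟨β, hβ⟩,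
    Int.cast_pos, Int.cast_pos]
  exact R.toRootPairing.zero_lt_pairingIn_iff' ℤ

lemma add_zsmul_mem_of_le {α β : V} (hα : α ∈ R.Φ) (hβ : β ∈ R.Φ)
    (hind : LinearIndependent ℝ ![α, β]) {a b z : ℤ} (ha : β + a • α ∈ R.Φ)
    (hb : β + b • α ∈ R.Φ) (haz : a ≤ z) (hzb : z ≤ b) : β + z • α ∈ R.Φ := by
  obtain ⟨q, -, p, -, hS⟩ :=
    R.toRootPairing.setOfPred_root_add_zsmul_eq_Icc_of_linearIndependent
      (i := ⟨α, hα⟩) (j := ⟨β, hβ⟩) hind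
  have key (y : ℤ) : β + y • α ∈ R.Φ ↔ q ≤ y ∧ y ≤ p := by
    simpa using Set.ext_iff.mp hS y
  rw [key] at ha hb ⊢
  omega

lemma s_mul_self {α : V} (hα : α ∈ R.Φ) : R.s α * R.s α = 1 := by
  ext v
  show R.s α (R.s α v) = v
  rw [R.s_eq_preReflection hα]
  exact involutive_preReflection (R.coroot_self α hα) v

lemma s_inv {α : V} (hα : α ∈ R.Φ) : (R.s α)⁻¹ = R.s α :=
  inv_eq_of_mul_eq_one_right (R.s_mul_self hα)

lemma s_mem_Wgrp {α : V} (hα : α ∈ R.Φ) : R.s α ∈ R.Wgrp :=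
  Subgroup.subset_closure ⟨α, hα, rfl⟩

lemma list_prod_mem_Wgrp {l : List V} (hl : ∀ a ∈ l, a ∈ R.Φ) :
    (l.map R.s).prod ∈ R.Wgrp := by
  refine R.Wgrp.list_prod_mem fun _ hw => ?_
  obtain ⟨a, ha, rfl⟩ := List.mem_map.mp hw
  exact R.s_mem_Wgrp (hl a ha)

lemma mapsTo_of_mem_Wgrp {w : V ≃ₗ[ℝ] V} (hw : w ∈ R.Wgrp) : MapsTo w R.Φ R.Φ := by
  induction hw using Subgroup.closure_induction'' with
  | mem _ h =>
    obtain ⟨α, hα, rfl⟩ := h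
    exact R.s_root_mem α hα
  | inv_mem _ h =>
    obtain ⟨α, hα, rfl⟩ := h
    rw [R.s_inv hα]
    exact R.s_root_mem α hα
  | one => exact mapsTo_id _
  | mul _ _ _ _ hx hy => exact hx.comp hy

lemma coroot_apply_of_mem_Wgrp {w : V ≃ₗ[ℝ] V} (hw : w ∈ R.Wgrp) {γ : V} (hγ : γ ∈ R.Φ) :
    R.coroot (w γ) = R.coroot γ ∘ₗ (w⁻¹ : V ≃ₗ[ℝ] V).toLinearMap := by
  refine R.coroot_eq_of_mapsTo (R.mapsTo_of_mem_Wgrp hw hγ) (by simp [R.coroot_self γ hγ]) ?_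
  have hconj : preReflection (w γ) (R.coroot γ ∘ₗ (w⁻¹ : V ≃ₗ[ℝ] V).toLinearMap) =
      w ∘ R.s γ ∘ (w⁻¹ : V ≃ₗ[ℝ] V) := by
    ext x
    simp [preReflection_apply, R.s_apply γ hγ]
  rw [hconj]
  exact (R.mapsTo_of_mem_Wgrp hw).comp
    ((R.mapsTo_of_mem_Wgrp (R.s_mem_Wgrp hγ)).comp (R.mapsTo_of_mem_Wgrp (inv_mem hw)))

lemma s_apply_of_mem_Wgrp {w : V ≃ₗ[ℝ] V} (hw : w ∈ R.Wgrp) {γ : V} (hγ : γ ∈ R.Φ) :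
    R.s (w γ) = w * R.s γ * w⁻¹ := by
  ext x
  simp [R.s_apply _ (R.mapsTo_of_mem_Wgrp hw hγ), R.s_apply γ hγ,
    R.coroot_apply_of_mem_Wgrp hw hγ]

lemma coroot_neg {α : V} (hα : α ∈ R.Φ) : R.coroot (-α) = -R.coroot α := by
  refine R.coroot_eq_of_mapsTo (R.neg_mem α hα) (by simp [R.coroot_self α hα]) ?_
  convert R.mapsTo_preReflection hα using 1
  ext x
  simp [preReflection_apply]

lemma s_neg {α : V} (hα : α ∈ R.Φ) : R.s (-α) = R.s α := by
  ext x
  simp [R.s_apply _ (R.neg_mem α hα), R.s_apply α hα, R.coroot_neg hα]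

lemma s_apply_self {α : V} (hα : α ∈ R.Φ) : R.s α α = -α := by
  rw [R.s_apply α hα, R.coroot_self α hα, two_smul, sub_add_cancel_left]

lemma s_eq_of_not_linearIndependent {α β : V} (hα : α ∈ R.Φ) (hβ : β ∈ R.Φ)
    (h : ¬ LinearIndependent ℝ ![α, β]) : R.s β = R.s α := by
  obtain ⟨t, rfl⟩ : ∃ t : ℝ, t • α = β := by
    simpa [LinearIndependent.pair_iff' (R.ne_zero α hα)] using h
  have ht : t ≠ 0 := by rintro rfl; exact R.ne_zero _ hβ (zero_smul ℝ α)
  have hcoroot : R.coroot (t • α) = t⁻¹ • R.coroot α := by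
    refine R.coroot_eq_of_mapsTo hβ (by simp [R.coroot_self α hα, ht]) ?_
    convert R.mapsTo_preReflection hα using 1
    ext x
    simp [preReflection_apply, smul_smul, mul_right_comm _ _ t, inv_mul_cancel₀ ht]
  ext x
  simp [R.s_apply _ hβ, R.s_apply α hα, hcoroot, smul_smul, mul_right_comm _ _ t,
    inv_mul_cancel₀ ht]

lemma add_nsmul_mem_pos {α δ : V} (hα : α ∈ R.pos) (hδ : δ ∈ R.pos) {n : ℕ}
    (h : ∀ j ≤ n, δ + j • α ∈ R.Φ) : δ + n • α ∈ R.pos := by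
  induction n with
  | zero => simpa using hδ
  | succ n ih =>
    have hmem := h (n + 1) le_rfl
    rw [succ_nsmul, ← add_assoc] at hmem ⊢
    exact R.pos_add_mem _ (ih fun j hj => h j (by omega)) α hα hmem

lemma sub_nsmul_mem_pos {α δ : V} (hα : IsSimpleRoot R α) (hδ : δ ∈ R.pos) {n : ℕ}
    (h : ∀ j ≤ n, δ - j • α ∈ R.Φ) : δ - n • α ∈ R.pos := by
  induction n with
  | zero => simpa using hδ
  | succ n ih =>
    have hprev := ih fun j hj => h j (by omega)
    refine (R.mem_pos_or _ (h (n + 1) le_rfl)).resolve_right fun hneg => hα.2 ?_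
    exact ⟨_, hprev, _, hneg, by rw [succ_nsmul]; abel⟩

/-- The `α`-string through `δ` is unbroken between `δ` and `s_α δ`: climbing it by `α` stays in
`Φ⁺`, and descending it cannot leave `Φ⁺` because `α` is not a sum of two positive roots. -/
lemma s_apply_mem_pos_of_isSimpleRoot {α δ : V} (hα : IsSimpleRoot R α) (hδ : δ ∈ R.pos)
    (hind : LinearIndependent ℝ ![α, δ]) : R.s α δ ∈ R.pos := by
  have hαΦ := R.pos_subset hα.1
  have hδΦ := R.pos_subset hδ
  set k := R.pairing α δ
  have hs : R.s α δ = δ + (-k) • α := by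
    rw [R.s_apply α hαΦ, ← R.pairing_eq α hαΦ δ hδΦ, Int.cast_smul_eq_zsmul, neg_smul,
      sub_eq_add_neg]
  have hsΦ : δ + (-k) • α ∈ R.Φ := hs ▸ R.s_root_mem α hαΦ δ hδΦ
  have hδΦ' : δ + (0 : ℤ) • α ∈ R.Φ := by simpa using hδΦ
  rw [hs]
  rcases le_or_gt k 0 with hk | hk
  · obtain ⟨n, hn⟩ : ∃ n : ℕ, -k = n := ⟨(-k).toNat, by omega⟩
    rw [hn, natCast_zsmul]
    refine R.add_nsmul_mem_pos hα.1 hδ fun j hj => ?_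
    rw [← natCast_zsmul]
    exact R.add_zsmul_mem_of_le hαΦ hδΦ hind hδΦ' hsΦ (by omega) (by omega)
  · obtain ⟨n, hn⟩ : ∃ n : ℕ, k = n := ⟨k.toNat, by omega⟩
    rw [hn, neg_smul, natCast_zsmul, ← sub_eq_add_neg]
    refine R.sub_nsmul_mem_pos hα hδ fun j hj => ?_
    rw [sub_eq_add_neg, ← natCast_zsmul, ← neg_smul]
    exact R.add_zsmul_mem_of_le hαΦ hδΦ hind hsΦ hδΦ' (by omega) (by omega)

def DominanceLT (δ γ : V) : Prop :=
  ∃ M : Multiset V, M ≠ 0 ∧ (∀ a ∈ M, a ∈ R.pos) ∧ δ + M.sum = γ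

lemma multiset_sum_ne_zero {M : Multiset V} (hM : M ≠ 0) (hpos : ∀ a ∈ M, a ∈ R.pos) :
    M.sum ≠ 0 := by
  induction hcard : M.card using Nat.strong_induction_on generalizing M with
  | _ n ih =>
  intro hsum
  obtain ⟨β, hβM⟩ := Multiset.exists_mem_of_ne_zero hM
  obtain ⟨M', rfl⟩ := Multiset.exists_cons_of_mem hβM
  have hβ := hpos β (Multiset.mem_cons_self β M')
  have hβΦ := R.pos_subset hβ
  -- `⟨β∨, M'.sum⟩ = -2`, so some `δ ∈ M'` has `⟨β∨, δ⟩ < 0` and `β + δ` is a positive root.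
  obtain ⟨δ, hδM, hβδ⟩ : ∃ δ ∈ M', R.coroot β δ < 0 := by
    by_contra! hnonneg
    have h0 : R.coroot β (β ::ₘ M').sum = 0 := by rw [hsum, map_zero]
    rw [Multiset.sum_cons, map_add, R.coroot_self β hβΦ, map_multiset_sum] at h0
    have := Multiset.sum_nonneg (s := M'.map (R.coroot β)) (by simpa using hnonneg)
    linarith
  obtain ⟨M'', rfl⟩ := Multiset.exists_cons_of_mem hδM
  have hδ := hpos δ (by simp)
  have hne : β + δ ≠ 0 := fun h => R.pos_not_neg β hβ (eq_neg_of_add_eq_zero_right h ▸ hδ)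
  have hβδΦ := R.add_mem_of_coroot_neg hβΦ (R.pos_subset hδ) hβδ hne
  refine ih _ (by simp [← hcard]) (M := (β + δ) ::ₘ M'') (by simp) ?_ rfl ?_
  · simp only [Multiset.mem_cons, forall_eq_or_imp]
    exact ⟨R.pos_add_mem β hβ δ hδ hβδΦ, fun a ha => hpos a (by simp [ha])⟩
  · rw [← hsum]
    simp only [Multiset.sum_cons]
    abel

instance : IsStrictOrder V R.DominanceLT where
  irrefl γ := by
    rintro ⟨M, hM, hpos, hsum⟩
    exact R.multiset_sum_ne_zero hM hpos (by simpa using hsum)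
  trans _ _ _ := by
    rintro ⟨M₁, hM₁, hpos₁, rfl⟩ ⟨M₂, -, hpos₂, rfl⟩
    refine ⟨M₁ + M₂, by simp [hM₁], ?_, by rw [Multiset.sum_add, add_assoc]⟩
    simpa [or_imp, forall_and] using ⟨hpos₁, hpos₂⟩

lemma dominanceLT_add {β ε : V} (hε : ε ∈ R.pos) : R.DominanceLT β (β + ε) :=
  ⟨{ε}, by simp, by simpa using hε, by simp⟩

@[elab_as_elim]
lemma pos_induction {P : V → Prop}
    (ih : ∀ γ ∈ R.pos, (∀ δ ∈ R.pos, R.DominanceLT δ γ → P δ) → P γ) {γ : V} (hγ : γ ∈ R.pos) :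
    P γ :=
  R.pos.finite_toSet.wellFoundedOn.induction hγ ih

lemma exists_simple_sum {γ : V} (hγ : γ ∈ R.pos) :
    ∃ M : Multiset V, (∀ a ∈ M, IsSimpleRoot R a) ∧ M.sum = γ := by
  refine R.pos_induction (fun γ hγ ih => ?_) hγ
  by_cases hs : IsSimpleRoot R γ
  · exact ⟨{γ}, by simpa using hs, by simp⟩
  obtain ⟨β, hβ, ε, hε, rfl⟩ : ∃ β ∈ R.pos, ∃ ε ∈ R.pos, γ = β + ε := by
    simpa [IsSimpleRoot, hγ] using hs
  obtain ⟨M₁, hM₁, h₁⟩ := ih β hβ (R.dominanceLT_add hε)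
  obtain ⟨M₂, hM₂, h₂⟩ := ih ε hε (add_comm ε β ▸ R.dominanceLT_add hβ)
  exact ⟨M₁ + M₂, by simpa [or_imp, forall_and] using ⟨hM₁, hM₂⟩, by rw [Multiset.sum_add, h₁, h₂]⟩

lemma exists_simple_word_s {γ : V} (hγ : γ ∈ R.pos) :
    ∃ l : List V, (∀ a ∈ l, IsSimpleRoot R a) ∧ (l.map R.s).prod = R.s γ := by
  refine R.pos_induction (fun γ hγ ih => ?_) hγ
  have hγΦ := R.pos_subset hγ
  obtain ⟨M, hM, hsum⟩ := R.exists_simple_sum hγ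
  obtain ⟨a, haM, hγa⟩ : ∃ a ∈ M, 0 < R.coroot γ a := by
    by_contra! h
    have := Multiset.sum_map_le_sum_map (R.coroot γ) 0 h
    rw [← map_multiset_sum, hsum, R.coroot_self γ hγΦ] at this
    norm_num at this
  have ha := hM a haM
  have haΦ := R.pos_subset ha.1
  by_cases hind : LinearIndependent ℝ ![a, γ]
  swap
  · exact ⟨[a], by simpa using ha, by simp [R.s_eq_of_not_linearIndependent haΦ hγΦ hind]⟩
  -- `s_a γ = γ - k a` with `k = ⟨a∨, γ⟩ ≥ 1`, so `s_a γ` is a smaller positive root.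
  have hlt : R.DominanceLT (R.s a γ) γ := by
    have hk : (0 : ℝ) < R.pairing a γ := by
      rwa [R.pairing_eq a haΦ γ hγΦ, ← R.coroot_pos_comm hγΦ haΦ]
    obtain ⟨k, hk'⟩ : ∃ k : ℕ, R.pairing a γ = k + 1 := ⟨(R.pairing a γ).toNat - 1, by
      have : 0 < R.pairing a γ := by exact_mod_cast hk
      omega⟩
    refine ⟨Multiset.replicate (k + 1) a, by simp, fun b hb => ?_, ?_⟩
    · rw [Multiset.eq_of_mem_replicate hb]
      exact ha.1
    · rw [R.s_apply a haΦ, ← R.pairing_eq a haΦ γ hγΦ, hk', Multiset.sum_replicate]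
      push_cast
      rw [← Nat.cast_add_one, Nat.cast_smul_eq_nsmul, sub_add_cancel]
  obtain ⟨l, hl, hprod⟩ := ih _ (R.s_apply_mem_pos_of_isSimpleRoot ha hγ hind) hlt
  refine ⟨a :: l ++ [a], ?_, ?_⟩
  · simp only [List.cons_append, List.mem_cons, List.mem_append, List.not_mem_nil, or_false]
    rintro b (rfl | hb | rfl)
    exacts [ha, hl b hb, ha]
  · simp only [List.map_append, List.map_cons, List.map_nil, List.prod_append, List.prod_cons,
      List.prod_nil, mul_one, hprod, R.s_apply_of_mem_Wgrp (R.s_mem_Wgrp haΦ) hγΦ, R.s_inv haΦ]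
    rw [← mul_assoc, ← mul_assoc, R.s_mul_self haΦ, one_mul, mul_assoc, R.s_mul_self haΦ, mul_one]

lemma exists_simple_word_of_mem_Wgrp {w : V ≃ₗ[ℝ] V} (hw : w ∈ R.Wgrp) :
    ∃ l : List V, (∀ a ∈ l, IsSimpleRoot R a) ∧ (l.map R.s).prod = w := by
  have hs : ∀ γ ∈ R.Φ, ∃ l : List V, (∀ a ∈ l, IsSimpleRoot R a) ∧ (l.map R.s).prod = R.s γ := by
    intro γ hγ
    rcases R.mem_pos_or γ hγ with hpos | hneg
    · exact R.exists_simple_word_s hpos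
    · simpa [R.s_neg hγ] using R.exists_simple_word_s hneg
  induction hw using Subgroup.closure_induction'' with
  | mem _ h =>
    obtain ⟨γ, hγ, rfl⟩ := h
    exact hs γ hγ
  | inv_mem _ h =>
    obtain ⟨γ, hγ, rfl⟩ := h
    simpa [R.s_inv hγ] using hs γ hγ
  | one => exact ⟨[], by simp, by simp⟩
  | mul _ _ _ _ hx hy =>
    obtain ⟨l₁, hl₁, rfl⟩ := hx
    obtain ⟨l₂, hl₂, rfl⟩ := hy
    exact ⟨l₁ ++ l₂, by simpa [or_imp, forall_and] using ⟨hl₁, hl₂⟩, by simp⟩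

lemma exists_eraseIdx_of_apply_notMem_pos {l : List V} (hl : ∀ a ∈ l, IsSimpleRoot R a)
    {b : V} (hb : b ∈ R.pos) (hneg : (l.map R.s).prod b ∉ R.pos) :
    ∃ j, (l.map R.s).prod * R.s b = ((l.eraseIdx j).map R.s).prod := by
  induction l with
  | nil => exact absurd hb (by simpa using hneg)
  | cons a t ih =>
    have ha := hl a List.mem_cons_self
    have ht : ∀ c ∈ t, IsSimpleRoot R c := fun c hc => hl c (List.mem_cons_of_mem a hc)
    set T := (t.map R.s).prod
    have hT : T ∈ R.Wgrp := R.list_prod_mem_Wgrp fun c hc => R.pos_subset (ht c hc).1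
    by_cases hTb : T b ∈ R.pos
    · -- `s_a` sends the positive root `T b` to a negative one, so `T b` is proportional to `a`.
      have hdep : ¬ LinearIndependent ℝ ![a, T b] := fun hind =>
        hneg (by simpa using R.s_apply_mem_pos_of_isSimpleRoot ha hTb hind)
      have hsa := R.s_eq_of_not_linearIndependent (R.pos_subset ha.1) (R.pos_subset hTb) hdep
      rw [R.s_apply_of_mem_Wgrp hT (R.pos_subset hb)] at hsa
      refine ⟨0, ?_⟩
      simp only [List.map_cons, List.prod_cons, List.eraseIdx_cons_zero, ← hsa]
      rw [inv_mul_cancel_right, mul_assoc, R.s_mul_self (R.pos_subset hb), mul_one]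
    · obtain ⟨j, hj⟩ := ih ht hTb
      exact ⟨j + 1, by simp only [List.map_cons, List.prod_cons, List.eraseIdx_cons_succ,
        mul_assoc, ← hj]; rfl⟩

lemma eq_one_of_mapsTo_pos {w : V ≃ₗ[ℝ] V} (hw : w ∈ R.Wgrp)
    (hpos : MapsTo w R.pos R.pos) : w = 1 := by
  obtain ⟨l, hl, rfl⟩ := R.exists_simple_word_of_mem_Wgrp hw
  clear hw
  induction hlen : l.length using Nat.strong_induction_on generalizing l with
  | _ n ih =>
  rcases l.eq_nil_or_concat' with rfl | ⟨l', b, rfl⟩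
  · simp
  have hb := (hl b (by simp)).1
  have hl' : ∀ a ∈ l', IsSimpleRoot R a := fun a ha => hl a (by simp [ha])
  simp only [List.map_append, List.map_cons, List.map_nil, List.prod_append, List.prod_cons,
    List.prod_nil, mul_one] at hpos ⊢
  have hneg : (l'.map R.s).prod b ∉ R.pos := fun h => R.pos_not_neg _ h <| by
    simpa [R.s_apply_self (R.pos_subset hb)] using hpos hb
  obtain ⟨j, hj⟩ := R.exists_eraseIdx_of_apply_notMem_pos hl' hb hneg
  rw [hj] at hpos ⊢
  refine ih _ ?_ _ (fun a ha => hl' a (List.mem_of_mem_eraseIdx ha)) hpos rfl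
  have := l'.length_eraseIdx_le j
  simp only [List.length_append, List.length_singleton] at hlen
  omega

lemma mul_self_eq_one_of_neg_mem_pos {w₀ : V ≃ₗ[ℝ] V} (hw₀W : w₀ ∈ R.Wgrp)
    (hw₀ : ∀ α ∈ R.pos, -(w₀ α) ∈ R.pos) : w₀ * w₀ = 1 :=
  R.eq_one_of_mapsTo_pos (mul_mem hw₀W hw₀W) fun α hα => by
    simpa using hw₀ _ (hw₀ α hα)

lemma neg_apply_mem_pos_iff {w₀ : V ≃ₗ[ℝ] V} (hsq : w₀ * w₀ = 1)
    (hw₀ : ∀ α ∈ R.pos, -(w₀ α) ∈ R.pos) (x : V) : -(w₀ x) ∈ R.pos ↔ x ∈ R.pos := by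
  refine ⟨fun h => ?_, hw₀ x⟩
  simpa [← LinearEquiv.mul_apply, hsq] using hw₀ _ h

lemma s_neg_apply {w₀ : V ≃ₗ[ℝ] V} (hw₀W : w₀ ∈ R.Wgrp) (hsq : w₀ * w₀ = 1) {α : V}
    (hα : α ∈ R.Φ) : R.s (-(w₀ α)) = w₀ * R.s α * w₀ := by
  rw [R.s_neg (R.mapsTo_of_mem_Wgrp hw₀W hα), R.s_apply_of_mem_Wgrp hw₀W hα,
    inv_eq_of_mul_eq_one_right hsq]

lemma coroot_neg_apply {w₀ : V ≃ₗ[ℝ] V} (hw₀W : w₀ ∈ R.Wgrp) {α : V} (hα : α ∈ R.Φ) :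
    R.coroot (-(w₀ α)) = -(R.coroot α ∘ₗ (w₀⁻¹ : V ≃ₗ[ℝ] V).toLinearMap) := by
  rw [R.coroot_neg (R.mapsTo_of_mem_Wgrp hw₀W hα), R.coroot_apply_of_mem_Wgrp hw₀W hα]

end RootSystemData

lemma mul_mul_mul_eq_self_of_mul_self_eq_one {M : Type*} [Monoid M] {g : M} (hg : g * g = 1)
    (x : M) : g * (g * x * g) * g = x := by
  rw [← mul_assoc, ← mul_assoc, hg, one_mul, mul_assoc, hg, mul_one]

namespace IncPath

variable {R : RootSystemData V} {N : ℕ} {S : Set (Fin N)} {w₀ : V ≃ₗ[ℝ] V}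

/-- The labels and endpoints of the image are only prescribed up to equations, so that `conj` can
be applied to its own output. -/
def conj (hw₀W : w₀ ∈ R.Wgrp) (hw₀ : ∀ α ∈ R.pos, -(w₀ α) ∈ R.pos) {lab lab' : Fin N → V}
    (hlab : ∀ i, lab' i = -(w₀ (lab i))) {u v u' v' : V ≃ₗ[ℝ] V} (hu : u' = w₀ * u * w₀)
    (hv : v' = w₀ * v * w₀) (p : IncPath R lab S u v) : IncPath R lab' S u' v' where
  len := p.len
  ix := p.ix
  mono := p.mono
  mem_S := p.mem_S
  m := p.m
  vert j := w₀ * p.vert j * w₀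
  vert_zero := by rw [p.vert_zero, hu]
  vert_last := by rw [p.vert_last, hv]
  lab_mem i := hlab _ ▸ hw₀ _ (p.lab_mem i)
  step i := by
    have hsq := R.mul_self_eq_one_of_neg_mem_pos hw₀W hw₀
    rw [hlab, R.s_neg_apply hw₀W hsq (R.pos_subset (p.lab_mem i)), p.step i]
    simp only [mul_assoc]
    rw [← mul_assoc w₀ w₀, hsq, one_mul]
  m_lb i := by
    have hsq := R.mul_self_eq_one_of_neg_mem_pos hw₀W hw₀
    have happly : (w₀ * p.vert i.castSucc * w₀) (lab' (p.ix i)) =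
        -(w₀ (p.vert i.castSucc (lab (p.ix i)))) := by
      simp [hlab, ← LinearEquiv.mul_apply w₀ w₀, hsq]
    rw [happly, if_congr (R.neg_apply_mem_pos_iff hsq hw₀ _) rfl rfl]
    exact p.m_lb i

lemma conj_conj (hw₀W : w₀ ∈ R.Wgrp) (hw₀ : ∀ α ∈ R.pos, -(w₀ α) ∈ R.pos)
    {lab lab' : Fin N → V} (hlab : ∀ i, lab' i = -(w₀ (lab i)))
    (hlab' : ∀ i, lab i = -(w₀ (lab' i))) {u v u' v' : V ≃ₗ[ℝ] V}
    (hu : u' = w₀ * u * w₀) (hv : v' = w₀ * v * w₀) (hu' : u = w₀ * u' * w₀)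
    (hv' : v = w₀ * v' * w₀) (p : IncPath R lab S u v) :
    conj hw₀W hw₀ hlab' hu' hv' (conj hw₀W hw₀ hlab hu hv p) = p := by
  have hsq := R.mul_self_eq_one_of_neg_mem_pos hw₀W hw₀
  cases p
  simp only [conj, mk.injEq, heq_eq_eq, true_and]
  funext j
  exact mul_mul_mul_eq_self_of_mul_self_eq_one hsq _

lemma wt_conj (hw₀W : w₀ ∈ R.Wgrp) (hw₀ : ∀ α ∈ R.pos, -(w₀ α) ∈ R.pos) {lab lab' : Fin N → V}
    (hlab : ∀ i, lab' i = -(w₀ (lab i))) {u v u' v' : V ≃ₗ[ℝ] V} (hu : u' = w₀ * u * w₀)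
    (hv : v' = w₀ * v * w₀) (p : IncPath R lab S u v) :
    (conj hw₀W hw₀ hlab hu hv p).wt = -(p.wt ∘ₗ (w₀⁻¹ : V ≃ₗ[ℝ] V).toLinearMap) := by
  ext x
  simp [wt, conj, hlab, R.coroot_neg_apply hw₀W (R.pos_subset (p.lab_mem _))]
  rfl

def conjEquiv (hw₀W : w₀ ∈ R.Wgrp) (hw₀ : ∀ α ∈ R.pos, -(w₀ α) ∈ R.pos) {lab : Fin N → V}
    (u v : V ≃ₗ[ℝ] V) :
    IncPath R lab S u v ≃ IncPath R (fun i => -(w₀ (lab i))) S (w₀ * u * w₀) (w₀ * v * w₀) :=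
  have hsq := R.mul_self_eq_one_of_neg_mem_pos hw₀W hw₀
  have hlab' (i : Fin N) : lab i = -(w₀ (-(w₀ (lab i)))) := by
    simp [← LinearEquiv.mul_apply, hsq]
  { toFun := conj hw₀W hw₀ (fun _ => rfl) rfl rfl
    invFun := conj hw₀W hw₀ hlab' (mul_mul_mul_eq_self_of_mul_self_eq_one hsq u).symm
      (mul_mul_mul_eq_self_of_mul_self_eq_one hsq v).symm
    left_inv := conj_conj hw₀W hw₀ _ _ _ _ _ _
    right_inv := conj_conj hw₀W hw₀ _ _ _ _ _ _ }

end IncPath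

def ReflectionOrder.map {R : RootSystemData V} {N : ℕ} (RO : ReflectionOrder R N)
    (f : V ≃ₗ[ℝ] V) (hf : ∀ x, f x ∈ R.pos ↔ x ∈ R.pos) : ReflectionOrder R N where
  β i := f (RO.β i)
  inj := f.injective.comp RO.inj
  range_eq := by
    rw [Set.range_comp' f RO.β, RO.range_eq, LinearEquiv.image_eq_preimage_symm]
    ext x
    simpa using (hf (f.symm x)).symm
  order3 i j k h := RO.order3 i j k (f.injective (by rw [map_add, h]))

/-- `α ≺' β :⟺ −w₀α ≺ −w₀β` defines a reflection order with `i`-th element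
`−w₀ β_i`, and conjugation by `w₀` together with relabelling by `−w₀` gives a bijection
`Paths^≺_{≤n}(u ⇒ v) ≃ Paths^{≺'}_{≤n}(w₀uw₀ ⇒ w₀vw₀)` preserving lengths and sending
weight `ω` to `−w₀ω`. -/
theorem statement6 (R : RootSystemData V) {N : ℕ} (RO : ReflectionOrder R N)
    (n : ℕ) (u v : V ≃ₗ[ℝ] V)
    (w0 : V ≃ₗ[ℝ] V) (hw0W : w0 ∈ R.Wgrp) (hw0 : ∀ α ∈ R.pos, -(w0 α) ∈ R.pos) :
    (∃ RO' : ReflectionOrder R N, RO'.β = fun i => -(w0 (RO.β i)))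
    ∧ ∃ e : IncPath R RO.β {j : Fin N | (j : ℕ) < n} u v ≃
          IncPath R (fun i : Fin N => -(w0 (RO.β i))) {j : Fin N | (j : ℕ) < n}
            (w0 * u * w0) (w0 * v * w0),
        ∀ p : IncPath R RO.β {j : Fin N | (j : ℕ) < n} u v,
          ∃ h : (e p).len = p.len,
            (∀ i, (e p).ix i = p.ix (Fin.cast h i)) ∧
            (∀ i, (e p).m i = p.m (Fin.cast h i)) ∧
            (∀ j : Fin ((e p).len + 1),
              (e p).vert j = w0 * p.vert (Fin.cast (by omega) j) * w0) ∧
            IncPath.wt (e p) = -(IncPath.wt p ∘ₗ ((w0⁻¹ : V ≃ₗ[ℝ] V)).toLinearMap) := by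
  have hsq := R.mul_self_eq_one_of_neg_mem_pos hw0W hw0
  refine ⟨⟨RO.map (w0.trans (LinearEquiv.neg ℝ)) (R.neg_apply_mem_pos_iff hsq hw0), rfl⟩,
    IncPath.conjEquiv hw0W hw0 u v, fun p => ?_⟩
  exact ⟨rfl, fun _ => rfl, fun _ => rfl, fun _ => rfl,
    IncPath.wt_conj hw0W hw0 (fun _ => rfl) rfl rfl p⟩

end
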